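/- Let (ξ_i, 𝔉_i) be square-integrable martingale differences, S_n = Σ ξ_i, B_n(0) = Σ (ξ_i⁺)² + Σ E[(ξ_i⁻)² | 𝔉_{i-1}]. Then for all x, y > 0, P(S_n ≥ x B_n(0), B_n(0) ≥ y) ≤ exp{- x² y / 2}. -/

import Mathlib

/-! For `x ≥ 0` the elementary inequality `exp (t - (t⁺)²/2) ≤ 1 + t + (t⁻)²/2`, applied to
`t = x ξᵢ`, together with `E[ξᵢ | 𝔉ᵢ₋₁] = 0` and `1 + a ≤ exp a`, shows that the factors
`Dᵢ = exp (x ξᵢ - x² (ξᵢ⁺)²/2 - x² E[(ξᵢ⁻)² | 𝔉ᵢ₋₁]/2)` satisfy `E[Dᵢ | 𝔉ᵢ₋₁] ≤ 1`.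
Hence `∏_{i ≤ N} Dᵢ = exp (x S_N - x² B_N(0)/2)` is a supermartingale of expectation at most `1`.
On the event `{S_n ≥ x B_n(0), B_n(0) ≥ y}` its exponent is at least `x² B_n(0)/2 ≥ x² y/2`, and
Markov's inequality concludes. -/

open MeasureTheory Real Finset

namespace Real

lemma exp_sub_sq_div_two_le_one_add {u : ℝ} (hu : 0 ≤ u) : exp (u - u ^ 2 / 2) ≤ 1 + u := by
  rw [← le_log_iff_exp_le (by linarith)]
  refine le_trans ?_ (le_log_one_add_of_nonneg hu)
  rw [le_div_iff₀ (by linarith)]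
  nlinarith [pow_nonneg hu 3]

lemma exp_le_one_add_add_sq_div_two {u : ℝ} (hu : u ≤ 0) : exp u ≤ 1 + u + u ^ 2 / 2 := by
  -- `exp (-u) ≥ 1 - u + u²/2` and `(1 + u + u²/2)(1 - u + u²/2) = 1 + u⁴/4 ≥ 1`
  have hneg : 1 + -u + (-u) ^ 2 / 2 ≤ exp (-u) := quadratic_le_exp_of_nonneg (neg_nonneg.2 hu)
  have hinv : exp u * exp (-u) = 1 := by rw [← exp_add, add_neg_cancel, exp_zero]
  nlinarith [mul_le_mul_of_nonneg_left hneg (exp_pos u).le, sq_nonneg (u ^ 2), exp_pos u]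

lemma exp_mul_sub_sq_max_le {x : ℝ} (hx : 0 ≤ x) (t : ℝ) :
    exp (x * t - x ^ 2 / 2 * max t 0 ^ 2) ≤ 1 + x * t + x ^ 2 / 2 * max (-t) 0 ^ 2 := by
  rcases le_total 0 t with ht | ht
  · rw [max_eq_left ht, max_eq_right (neg_nonpos.2 ht)]
    convert exp_sub_sq_div_two_le_one_add (mul_nonneg hx ht) using 1 <;> ring_nf
  · rw [max_eq_right ht, max_eq_left (neg_nonneg.2 ht)]
    convert exp_le_one_add_add_sq_div_two (mul_nonpos_of_nonneg_of_nonpos hx ht) using 1 <;> ring_nf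

lemma mul_sub_sq_max_le_half {x : ℝ} (hx : 0 ≤ x) (t : ℝ) :
    x * t - x ^ 2 / 2 * max t 0 ^ 2 ≤ 1 / 2 := by
  rcases le_total 0 t with ht | ht
  · rw [max_eq_left ht]; nlinarith [sq_nonneg (x * t - 1)]
  · rw [max_eq_right ht]; nlinarith [mul_nonpos_of_nonneg_of_nonpos hx ht]

lemma exp_neg_mul_one_add_le_one (a : ℝ) : exp (-a) * (1 + a) ≤ 1 := by
  rw [exp_neg, inv_mul_le_iff₀ (exp_pos a), mul_one, add_comm]
  exact add_one_le_exp a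

end Real

section ConditionalBounds

variable {Ω : Type*} {m mΩ : MeasurableSpace Ω} {μ : Measure Ω} [IsFiniteMeasure μ]
  {ξ : Ω → ℝ} {x : ℝ}

lemma integrable_exp_mul_sub_sq_max (hx : 0 ≤ x) (hξ : AEStronglyMeasurable ξ μ) :
    Integrable (fun ω => exp (x * ξ ω - x ^ 2 / 2 * max (ξ ω) 0 ^ 2)) μ := by
  refine .of_bound ((by fun_prop : Continuous fun t : ℝ =>
    exp (x * t - x ^ 2 / 2 * max t 0 ^ 2)).comp_aestronglyMeasurable hξ) (exp (1 / 2))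
    (ae_of_all _ fun ω => ?_)
  rw [norm_of_nonneg (exp_pos _).le]
  exact exp_le_exp.2 (mul_sub_sq_max_le_half hx _)

lemma condExp_exp_mul_sub_sq_max_le (hm : m ≤ mΩ) (hx : 0 ≤ x) (hξ : Integrable ξ μ)
    (hξ2 : Integrable (fun ω => max (-ξ ω) 0 ^ 2) μ) (hmart : μ[ξ | m] =ᵐ[μ] 0) :
    μ[fun ω => exp (x * ξ ω - x ^ 2 / 2 * max (ξ ω) 0 ^ 2) | m]
      ≤ᵐ[μ] fun ω => 1 + x ^ 2 / 2 * μ[fun ω => max (-ξ ω) 0 ^ 2 | m] ω := by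
  set g : Ω → ℝ := fun ω => max (-ξ ω) 0 ^ 2
  have hbound : (fun ω => exp (x * ξ ω - x ^ 2 / 2 * max (ξ ω) 0 ^ 2))
      ≤ (fun _ => (1 : ℝ)) + x • ξ + (x ^ 2 / 2) • g :=
    fun ω => exp_mul_sub_sq_max_le hx (ξ ω)
  have hint : Integrable ((fun _ => (1 : ℝ)) + x • ξ) μ := (integrable_const 1).add (hξ.smul x)
  filter_upwards [condExp_mono (m := m)
      (integrable_exp_mul_sub_sq_max hx hξ.aestronglyMeasurable)
      (hint.add (hξ2.smul _)) (ae_of_all _ hbound),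
    condExp_add hint (hξ2.smul (x ^ 2 / 2)) m,
    condExp_add (integrable_const (1 : ℝ)) (hξ.smul x) m,
    condExp_smul x ξ m, condExp_smul (x ^ 2 / 2) g m, hmart]
    with ω hmono hadd hadd' hsmul hsmul' hzero
  simp only [Pi.add_apply, Pi.smul_apply, smul_eq_mul, Pi.zero_apply] at *
  rw [hadd, hadd', hsmul, hsmul', hzero, condExp_const hm (1 : ℝ)] at hmono
  simpa using hmono

lemma condExp_exp_mul_sub_sq_max_sub_le_one (hm : m ≤ mΩ) (hx : 0 ≤ x) (hξ : Integrable ξ μ)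
    (hξ2 : Integrable (fun ω => max (-ξ ω) 0 ^ 2) μ) (hmart : μ[ξ | m] =ᵐ[μ] 0) :
    μ[fun ω => exp (x * ξ ω - x ^ 2 / 2 * max (ξ ω) 0 ^ 2
      - x ^ 2 / 2 * μ[fun ω => max (-ξ ω) 0 ^ 2 | m] ω) | m] ≤ᵐ[μ] 1 := by
  set c : Ω → ℝ := μ[fun ω => max (-ξ ω) 0 ^ 2 | m]
  have hc_nonneg : 0 ≤ᵐ[μ] c := condExp_nonneg (ae_of_all _ fun ω => by positivity)
  have hsplit : (fun ω => exp (x * ξ ω - x ^ 2 / 2 * max (ξ ω) 0 ^ 2 - x ^ 2 / 2 * c ω))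
      = (fun ω => exp (-(x ^ 2 / 2 * c ω)))
        * fun ω => exp (x * ξ ω - x ^ 2 / 2 * max (ξ ω) 0 ^ 2) := by
    ext ω; simp only [Pi.mul_apply, ← exp_add]; ring_nf
  have hfactor_le : ∀ᵐ ω ∂μ, ‖exp (-(x ^ 2 / 2 * c ω))‖ ≤ 1 := by
    filter_upwards [hc_nonneg] with ω hω
    rw [norm_of_nonneg (exp_pos _).le, exp_le_one_iff, neg_nonpos]
    exact mul_nonneg (by positivity) hω
  have hfactor_meas : StronglyMeasurable[m] fun ω => exp (-(x ^ 2 / 2 * c ω)) :=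
    (stronglyMeasurable_condExp.measurable.const_mul _).neg.exp.stronglyMeasurable
  rw [hsplit]
  filter_upwards [condExp_stronglyMeasurable_mul_of_bound hm hfactor_meas
      (integrable_exp_mul_sub_sq_max hx hξ.aestronglyMeasurable) 1 hfactor_le,
    condExp_exp_mul_sub_sq_max_le hm hx hξ hξ2 hmart] with ω hpull hle
  rw [hpull, Pi.mul_apply, Pi.one_apply]
  exact (mul_le_mul_of_nonneg_left hle (exp_pos _).le).trans (exp_neg_mul_one_add_le_one _)

end ConditionalBounds

section Supermartingale

variable {Ω : Type*} {m : MeasurableSpace Ω} {μ : Measure Ω} [IsFiniteMeasure μ]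

theorem supermartingale_prod_Icc {ℱ : Filtration ℕ m} {D : ℕ → Ω → ℝ} {C : ℝ}
    (hD : StronglyAdapted ℱ D) (hD_nonneg : ∀ i ω, 0 ≤ D i ω) (hD_le : ∀ i, ∀ᵐ ω ∂μ, D i ω ≤ C)
    (hcond : ∀ i, μ[D (i + 1) | ℱ i] ≤ᵐ[μ] 1) :
    Supermartingale (fun N ω => ∏ i ∈ Icc 1 N, D i ω) ℱ μ := by
  have hadapted : StronglyAdapted ℱ fun N ω => ∏ i ∈ Icc 1 N, D i ω := fun N =>
    Finset.stronglyMeasurable_fun_prod _ fun i hi => (hD i).mono (ℱ.mono (mem_Icc.1 hi).2)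
  have hprod_le : ∀ N, ∀ᵐ ω ∂μ, ‖∏ i ∈ Icc 1 N, D i ω‖ ≤ C ^ N := by
    intro N
    filter_upwards [ae_all_iff.2 hD_le] with ω hω
    rw [norm_of_nonneg (prod_nonneg fun i _ => hD_nonneg i ω)]
    simpa using prod_le_prod (s := Icc 1 N) (fun i _ => hD_nonneg i ω) fun i _ => hω i
  have hint : ∀ N, Integrable (fun ω => ∏ i ∈ Icc 1 N, D i ω) μ := fun N =>
    .of_bound ((hadapted N).mono (ℱ.le N)).aestronglyMeasurable _ (hprod_le N)
  have hD_int : ∀ i, Integrable (D i) μ := fun i =>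
    .of_bound ((hD i).mono (ℱ.le i)).aestronglyMeasurable C <| by
      filter_upwards [hD_le i] with ω hω
      rwa [norm_of_nonneg (hD_nonneg i ω)]
  refine supermartingale_nat hadapted hint fun N => ?_
  have hsucc : (fun ω => ∏ i ∈ Icc 1 (N + 1), D i ω)
      = (fun ω => ∏ i ∈ Icc 1 N, D i ω) * D (N + 1) := by
    ext ω; exact prod_Icc_succ_top (Nat.le_add_left 1 N) _
  rw [hsucc]
  filter_upwards [condExp_stronglyMeasurable_mul_of_bound (ℱ.le N) (hadapted N) (hD_int (N + 1))
      _ (hprod_le N), hcond N] with ω hpull hle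
  rw [hpull, Pi.mul_apply]
  exact mul_le_of_le_one_right (prod_nonneg fun i _ => hD_nonneg i ω) hle

end Supermartingale

lemma measureReal_le_exp_neg_of_integral_exp_le_one {Ω : Type*} {m : MeasurableSpace Ω}
    {μ : Measure Ω} {f : Ω → ℝ} (hf : Integrable (fun ω => exp (f ω)) μ)
    (hf_le : ∫ ω, exp (f ω) ∂μ ≤ 1) (a : ℝ) : μ.real {ω | a ≤ f ω} ≤ exp (-a) := by
  have hmarkov := mul_meas_ge_le_integral_of_nonneg
    (ae_of_all _ fun ω => (exp_pos (f ω)).le) hf (exp a)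
  simp only [exp_le_exp] at hmarkov
  rw [exp_neg, ← one_div, le_div_iff₀' (exp_pos a)]
  exact hmarkov.trans hf_le

section DelyonFactor

variable {Ω : Type*} {m : MeasurableSpace Ω}

noncomputable def delyonFactor (μ : Measure Ω) (𝔉 : ℕ → MeasurableSpace Ω) (ξ : ℕ → Ω → ℝ)
    (x : ℝ) (i : ℕ) (ω : Ω) : ℝ :=
  exp (x * ξ i ω - x ^ 2 / 2 * max (ξ i ω) 0 ^ 2
    - x ^ 2 / 2 * μ[fun ω => max (-ξ i ω) 0 ^ 2 | 𝔉 (i - 1)] ω)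

lemma prod_delyonFactor (μ : Measure Ω) (𝔉 : ℕ → MeasurableSpace Ω) (ξ : ℕ → Ω → ℝ) (x : ℝ)
    (n : ℕ) (ω : Ω) :
    ∏ i ∈ Icc 1 n, delyonFactor μ 𝔉 ξ x i ω
      = exp (x * ∑ i ∈ Icc 1 n, ξ i ω - x ^ 2 / 2 * (∑ i ∈ Icc 1 n, max (ξ i ω) 0 ^ 2
          + ∑ i ∈ Icc 1 n, μ[fun ω => max (-ξ i ω) 0 ^ 2 | 𝔉 (i - 1)] ω)) := by
  simp only [delyonFactor, ← exp_sum, sum_sub_distrib, ← mul_sum, mul_add]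
  ring_nf

theorem supermartingale_prod_delyonFactor {μ : Measure Ω} [IsFiniteMeasure μ]
    {𝔉 : ℕ → MeasurableSpace Ω} (hle : ∀ i, 𝔉 i ≤ m) (hmono : Monotone 𝔉) {ξ : ℕ → Ω → ℝ}
    (hadp : ∀ i, StronglyMeasurable[𝔉 i] (ξ i)) (hsq : ∀ i, Integrable (fun ω => ξ i ω ^ 2) μ)
    (hmart : ∀ i, μ[ξ (i + 1) | 𝔉 i] =ᵐ[μ] 0) {x : ℝ} (hx : 0 ≤ x) :
    Supermartingale (fun N ω => ∏ i ∈ Icc 1 N, delyonFactor μ 𝔉 ξ x i ω) ⟨𝔉, hmono, hle⟩ μ := by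
  have hξ_int : ∀ i, Integrable (ξ i) μ := fun i =>
    ((memLp_two_iff_integrable_sq ((hadp i).mono (hle i)).aestronglyMeasurable).2
      (hsq i)).integrable one_le_two
  have hξ2_int : ∀ i, Integrable (fun ω => max (-ξ i ω) 0 ^ 2) μ := fun i =>
    (hsq i).mono' (((hξ_int i).aestronglyMeasurable.neg.sup aestronglyMeasurable_const).pow 2)
      (ae_of_all _ fun ω => by simp [abs_le, sq_le_sq, neg_le_abs])
  refine supermartingale_prod_Icc (C := exp (1 / 2)) (fun i => ?_)
    (fun i ω => (exp_pos _).le) (fun i => ?_) (fun i => ?_)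
  · have hξ_meas : Measurable[𝔉 i] (ξ i) := (hadp i).measurable
    have hc_meas : Measurable[𝔉 i] μ[fun ω => max (-ξ i ω) 0 ^ 2 | 𝔉 (i - 1)] :=
      (stronglyMeasurable_condExp.mono (hmono (Nat.sub_le i 1))).measurable
    exact Measurable.stronglyMeasurable (by unfold delyonFactor; fun_prop)
  · filter_upwards [condExp_nonneg (m := 𝔉 (i - 1)) (ae_of_all μ fun ω =>
      sq_nonneg (max (-ξ i ω) 0))] with ω hω
    refine exp_le_exp.2 ?_
    have := mul_sub_sq_max_le_half hx (ξ i ω)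
    have : 0 ≤ x ^ 2 / 2 * μ[fun ω => max (-ξ i ω) 0 ^ 2 | 𝔉 (i - 1)] ω :=
      mul_nonneg (by positivity) hω
    linarith
  · exact condExp_exp_mul_sub_sq_max_sub_le_one (hle i) hx (hξ_int (i + 1)) (hξ2_int (i + 1))
      (hmart i)

end DelyonFactor

theorem stmt_9_general {Ω : Type*} {m : MeasurableSpace Ω} {μ : Measure Ω} [IsProbabilityMeasure μ]
    (𝔉 : ℕ → MeasurableSpace Ω) (hle : ∀ i, 𝔉 i ≤ m) (hmono : Monotone 𝔉)
    (ξ : ℕ → Ω → ℝ)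
    (hadp : ∀ i, StronglyMeasurable[𝔉 i] (ξ i))
    (hsq : ∀ i, Integrable (fun ω => (ξ i ω) ^ 2) μ)
    (hmart : ∀ i : ℕ, 1 ≤ i → μ[ξ i | 𝔉 (i - 1)] =ᵐ[μ] 0)
    (n : ℕ) (x y : ℝ) (hx : 0 < x)
    (S B : Ω → ℝ)
    (hS : S = fun ω => ∑ i ∈ Finset.Icc 1 n, ξ i ω)
    (hB : B = fun ω =>
      (∑ i ∈ Finset.Icc 1 n, (max (ξ i ω) 0) ^ 2)
        + ∑ i ∈ Finset.Icc 1 n,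
            (μ[fun ω' => (max (-(ξ i ω')) 0) ^ 2 | 𝔉 (i - 1)]) ω) :
    (μ {ω | x * B ω ≤ S ω ∧ y ≤ B ω}).toReal ≤
      Real.exp (-(x ^ 2 * y) / 2) := by
  have hsuper := supermartingale_prod_delyonFactor hle hmono hadp hsq
    (fun i => hmart (i + 1) (Nat.le_add_left 1 i)) hx.le
  have hprod : ∀ ω, ∏ i ∈ Icc 1 n, delyonFactor μ 𝔉 ξ x i ω
      = exp (x * S ω - x ^ 2 / 2 * B ω) := by
    subst hS hB; exact prod_delyonFactor μ 𝔉 ξ x n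
  have hexp_le : ∫ ω, exp (x * S ω - x ^ 2 / 2 * B ω) ∂μ ≤ 1 := by
    simpa [hprod] using hsuper.setIntegral_le (Nat.zero_le n) MeasurableSet.univ
  calc (μ {ω | x * B ω ≤ S ω ∧ y ≤ B ω}).toReal
      ≤ μ.real {ω | x ^ 2 * y / 2 ≤ x * S ω - x ^ 2 / 2 * B ω} := by
        refine measureReal_mono fun ω ⟨hSB, hyB⟩ => ?_
        show x ^ 2 * y / 2 ≤ x * S ω - x ^ 2 / 2 * B ω
        nlinarith [mul_le_mul_of_nonneg_left hSB hx.le, mul_le_mul_of_nonneg_left hyB (sq_nonneg x)]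
    _ ≤ exp (-(x ^ 2 * y / 2)) := measureReal_le_exp_neg_of_integral_exp_le_one
        (by simpa only [hprod] using hsuper.integrable n) hexp_le _
    _ = exp (-(x ^ 2 * y) / 2) := by ring_nf

theorem stmt_9 {Ω : Type*} {m : MeasurableSpace Ω} {μ : Measure Ω} [IsProbabilityMeasure μ]
    (𝔉 : ℕ → MeasurableSpace Ω) (hle : ∀ i, 𝔉 i ≤ m) (hmono : Monotone 𝔉)
    (ξ : ℕ → Ω → ℝ)
    (hadp : ∀ i, StronglyMeasurable[𝔉 i] (ξ i))
    (hsq : ∀ i, Integrable (fun ω => (ξ i ω) ^ 2) μ)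
    (hmart : ∀ i : ℕ, 1 ≤ i → μ[ξ i | 𝔉 (i - 1)] =ᵐ[μ] 0)
    (n : ℕ) (x y : ℝ) (hx : 0 < x) (hy : 0 < y)
    (S B : Ω → ℝ)
    (hS : S = fun ω => ∑ i ∈ Finset.Icc 1 n, ξ i ω)
    (hB : B = fun ω =>
      (∑ i ∈ Finset.Icc 1 n, (max (ξ i ω) 0) ^ 2)
        + ∑ i ∈ Finset.Icc 1 n,
            (μ[fun ω' => (max (-(ξ i ω')) 0) ^ 2 | 𝔉 (i - 1)]) ω) :
    (μ {ω | x * B ω ≤ S ω ∧ y ≤ B ω}).toReal ≤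
      Real.exp (-(x ^ 2 * y) / 2) :=
  stmt_9_general 𝔉 hle hmono ξ hadp hsq hmart n x y hx S B hS hB
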